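/- Let m > 1 and 2 ≤ N ≤ m, assume (H1), and assume f is locally Lipschitz continuous on (b,∞). Let u₁, u₂ be two distinct radial solutions with b < α₁ < α₂, and set t(u) = r₁(u) − r₂(u) on (0,α₁). Then t has at least one zero in (0,α₁): there exists u ∈ (0,α₁) with r₁(u) = r₂(u). -/

import Mathlib

open Filter Set MeasureTheory intervalIntegral

noncomputable section

/-- The half-open interval `[0, R)` inside `ℝ`, where `R : EReal` may be `∞`. -/
def domR (R : EReal) : Set ℝ := {r : ℝ | 0 ≤ r ∧ (r : EReal) < R}

/-- The filter describing `r → R⁻` inside `ℝ` (it equals `atTop` when `R = ∞`). -/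
def limR (R : EReal) : Filter ℝ := Filter.comap Real.toEReal (nhdsWithin R (Set.Iio R))

/-- Assumption (H1): `f` is continuous on `(0,∞)`, nonpositive on `(0,b]` and
positive on `(b,∞)`, with `b > 0`. -/
def H1cond (b : ℝ) (f : ℝ → ℝ) : Prop :=
  0 < b ∧ ContinuousOn f (Set.Ioi 0) ∧
    (∀ u : ℝ, 0 < u → u ≤ b → f u ≤ 0) ∧ (∀ u : ℝ, b < u → 0 < f u)

/-- `u` (with derivative `u'`) is a radial solution on `[0, R)` of
`(r^{N-1} |u'|^{m-2} u')' = - r^{N-1} f(u)`, positive, `C¹` up to the origin,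
with `u'(0) = 0` and `u, u' → 0` as `r → R`. -/
def IsRadialSolution (N : ℕ) (m : ℝ) (f : ℝ → ℝ) (R : EReal) (u u' : ℝ → ℝ) : Prop :=
  0 < R ∧
  (∀ r ∈ domR R, HasDerivWithinAt u (u' r) (domR R) r) ∧
  ContinuousOn u' (domR R) ∧
  (∀ r ∈ domR R, 0 < u r) ∧
  u' 0 = 0 ∧
  (∀ r : ℝ, 0 < r → (r : EReal) < R →
    HasDerivAt (fun s : ℝ => s ^ (N - 1) * |u' s| ^ (m - 2) * u' s)
      (-(r ^ (N - 1) * f (u r))) r) ∧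
  Filter.Tendsto u (limR R) (nhds 0) ∧
  Filter.Tendsto u' (limR R) (nhds 0)

/-- `rr` is the (strictly decreasing) inverse on `(0, α)` of a radial solution `u`,
with derivatives `rr'`, `rr''`, satisfying the transformed ODE
`(m-1) r'' = (N-1) r'²/r + f(u) |r'|^m r'`. -/
def IsInvSol (N : ℕ) (m α : ℝ) (f : ℝ → ℝ) (R : EReal) (u rr rr' rr'' : ℝ → ℝ) : Prop :=
  (∀ v ∈ Set.Ioo 0 α,
    0 < rr v ∧ (rr v : EReal) < R ∧ u (rr v) = v ∧
    HasDerivAt rr (rr' v) v ∧ rr' v < 0 ∧ HasDerivAt rr' (rr'' v) v ∧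
    (m - 1) * rr'' v = ((N : ℝ) - 1) * (rr' v) ^ 2 / rr v + f v * |rr' v| ^ m * rr' v) ∧
  (∀ x : ℝ, 0 < x → (x : EReal) < R → ∃ v ∈ Set.Ioo 0 α, rr v = x)

/-- The function `ω(u) = r(u)^{N-1} / (r'(u) |r'(u)|^{m-2})`. -/
def omegaF (N : ℕ) (m : ℝ) (rr rr' : ℝ → ℝ) (v : ℝ) : ℝ :=
  rr v ^ (N - 1) / (rr' v * |rr' v| ^ (m - 2))

/-- The function `P(u) = a u ω(u) + r(u)^N ((m-1)/m · 1/|r'(u)|^m + (a/N) u f(u))`. -/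
def PF (N : ℕ) (m a : ℝ) (f rr rr' : ℝ → ℝ) (v : ℝ) : ℝ :=
  a * v * omegaF N m rr rr' v +
    rr v ^ N * ((m - 1) / m * (1 / |rr' v| ^ m) + a / (N : ℝ) * v * f v)

/-!
Suppose `r₁ ≠ r₂` on `(0, α₁)`. As `u → α₁`, `r₁ → 0` while `r₂(α₁) > 0`, so `r₁ < r₂`
throughout; and since `r₁' → -∞` there while `r₁' - r₂'` can only vanish with positive derivative,
also `r₁' < r₂'`. Hence `G = |u₂'|^m - |u₁'|^m`, compared at equal levels `u`, is positive and
satisfies `G' ≤ c G (-r₁') / r₂` with `c = m (N - 1) / (m - 1)`, so `log G + φ(r₁)` is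
antitone for suitable `φ`.

If `R₁ < ∞`, this keeps `G` away from `0` near `u = 0`, contradicting `u₁', u₂' → 0` at the
boundary. If `R₁ = ∞`, it gives `G ≥ δ r₁^{-c}`, while the flux `r₂^{N-1} |u₂'|^{m-1}` is
monotone on `(0, b]` (where `f ≤ 0`), so `|u₂'|^m ≤ M r₁^{-c}`. Thus `|u₁'| ≤ ρ |u₂'|` for some
`ρ < 1`, i.e. `r₂' ≥ ρ r₁'`, which bounds `r₁` on `(0, b]`; but `r₁` reaches every radius.
-/

open Topology
namespace Convex

variable {D : Set ℝ} {g g' : ℝ → ℝ}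

lemma strictAntiOn_of_hasDerivAt_neg (hD : Convex ℝ D) (hg : ∀ x ∈ D, HasDerivAt g (g' x) x)
    (hg' : ∀ x ∈ D, g' x < 0) : StrictAntiOn g D :=
  strictAntiOn_of_hasDerivWithinAt_neg hD (fun x hx ↦ (hg x hx).continuousAt.continuousWithinAt)
    (fun x hx ↦ (hg x (interior_subset hx)).hasDerivWithinAt)
    (fun x hx ↦ hg' x (interior_subset hx))

lemma antitoneOn_of_hasDerivAt_nonpos (hD : Convex ℝ D) (hg : ∀ x ∈ D, HasDerivAt g (g' x) x)
    (hg' : ∀ x ∈ D, g' x ≤ 0) : AntitoneOn g D :=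
  antitoneOn_of_hasDerivWithinAt_nonpos hD (fun x hx ↦ (hg x hx).continuousAt.continuousWithinAt)
    (fun x hx ↦ (hg x (interior_subset hx)).hasDerivWithinAt)
    (fun x hx ↦ hg' x (interior_subset hx))

lemma monotoneOn_of_hasDerivAt_nonneg (hD : Convex ℝ D) (hg : ∀ x ∈ D, HasDerivAt g (g' x) x)
    (hg' : ∀ x ∈ D, 0 ≤ g' x) : MonotoneOn g D :=
  monotoneOn_of_hasDerivWithinAt_nonneg hD (fun x hx ↦ (hg x hx).continuousAt.continuousWithinAt)
    (fun x hx ↦ (hg x (interior_subset hx)).hasDerivWithinAt)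
    (fun x hx ↦ hg' x (interior_subset hx))

end Convex

lemma HasDerivAt.exists_gt_of_deriv_pos {g : ℝ → ℝ} {g' s w : ℝ} (hg : HasDerivAt g g' s)
    (hg' : 0 < g') (hsw : s < w) : ∃ x ∈ Ioo s w, g s < g x := by
  have hslope : ∀ᶠ x in 𝓝[>] s, 0 < slope g s x :=
    ((hasDerivAt_iff_tendsto_slope.1 hg).mono_left
      (nhdsWithin_mono s fun x hx ↦ ne_of_gt hx)).eventually (eventually_gt_nhds hg')
  obtain ⟨x, hx, hxw⟩ := (hslope.and (Ioo_mem_nhdsGT hsw)).exists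
  rw [slope_def_field, div_pos_iff_of_pos_right (sub_pos.2 hxw.1), sub_pos] at hx
  exact ⟨x, hxw, hx⟩

/-- At the last point of `[v, w]` where `g ≥ 0`, `g` would have to cross zero downwards. -/
lemma neg_of_deriv_pos_at_zeros {g g' : ℝ → ℝ} {v w : ℝ} (hvw : v ≤ w)
    (hg : ∀ x ∈ Icc v w, HasDerivAt g (g' x) x) (hzero : ∀ x ∈ Icc v w, g x = 0 → 0 < g' x)
    (hw : g w < 0) : g v < 0 := by
  by_contra! hv
  have hclosed : IsClosed (Icc v w ∩ g ⁻¹' Ici 0) :=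
    ContinuousOn.preimage_isClosed_of_isClosed
      (fun x hx ↦ (hg x hx).continuousAt.continuousWithinAt) isClosed_Icc isClosed_Ici
  obtain ⟨s, ⟨hs, hgs⟩, hmax⟩ := (isCompact_Icc.of_isClosed_subset hclosed
    inter_subset_left).exists_isGreatest ⟨v, left_mem_Icc.2 hvw, hv⟩
  have hneg : ∀ x ∈ Ioc s w, g x < 0 := fun x hx ↦ by
    by_contra! hx0
    exact (hmax ⟨⟨hs.1.trans hx.1.le, hx.2⟩, hx0⟩).not_gt hx.1
  have hsw : s < w := hs.2.lt_of_ne fun h ↦ (h ▸ hgs : 0 ≤ g w).not_gt hw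
  have hgs0 : g s = 0 := by
    refine le_antisymm (le_of_tendsto ((hg s hs).continuousAt.tendsto.mono_left
      (nhdsWithin_le_nhds (s := Ioi s))) ?_) hgs
    filter_upwards [Ioc_mem_nhdsGT hsw] with x hx using (hneg x hx).le
  obtain ⟨x, hx, hgx⟩ := (hg s hs).exists_gt_of_deriv_pos (hzero s hs hgs0) hsw
  exact (hneg x ⟨hx.1, hx.2.le⟩).not_gt (hgs0 ▸ hgx)

lemma Real.mul_rpow_sub_one_sub_le {a e : ℝ} (he : 0 < e) (hea : e ≤ a) (m : ℝ) :
    e * (a ^ (m - 1) - e ^ (m - 1)) ≤ a ^ m - e ^ m := by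
  have ha : 0 < a := he.trans_le hea
  have hpow : ∀ x : ℝ, 0 < x → x ^ m = x ^ (m - 1) * x := fun x hx ↦ by
    rw [← Real.rpow_add_one hx.ne']; ring_nf
  rw [hpow a ha, hpow e he]
  nlinarith [mul_le_mul_of_nonneg_right hea (Real.rpow_pos_of_pos ha (m - 1)).le]

lemma Real.le_rpow_inv_mul_of_rpow_le {x y k m : ℝ} (hx : 0 ≤ x) (hy : 0 ≤ y) (hk : 0 ≤ k)
    (hm : 0 < m) (h : x ^ m ≤ k * y ^ m) : x ≤ k ^ m⁻¹ * y := by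
  rwa [← Real.rpow_le_rpow_iff hx (by positivity) hm, Real.mul_rpow (by positivity) hy,
    Real.rpow_inv_rpow hk hm.ne']

lemma Ioo_subset_domR {R : EReal} {y : ℝ} (hyR : (y : EReal) < R) : Ioo 0 y ⊆ domR R :=
  fun _ hz ↦ ⟨hz.1.le, (EReal.coe_lt_coe_iff.2 hz.2).trans hyR⟩

lemma domR_mem_nhds {R : EReal} {x : ℝ} (hx : 0 < x) (hxR : (x : EReal) < R) :
    domR R ∈ 𝓝 x := by
  obtain ⟨y, hxy, hyR⟩ := EReal.lt_iff_exists_real_btwn.1 hxR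
  exact mem_of_superset (Ioo_mem_nhds hx (mod_cast hxy)) (Ioo_subset_domR hyR)

lemma abs_rpow_sub_two_mul_of_neg {x : ℝ} (hx : x < 0) (m : ℝ) :
    |x| ^ (m - 2) * x = -(-x) ^ (m - 1) := by
  rw [abs_of_neg hx, show m - 1 = m - 2 + 1 by ring, Real.rpow_add_one (neg_ne_zero.2 hx.ne)]
  ring

lemma IsRadialSolution.tendsto_deriv_nhdsGT {N : ℕ} {m : ℝ} {f : ℝ → ℝ} {R : EReal}
    {u u' : ℝ → ℝ} (h : IsRadialSolution N m f R u u') : Tendsto u' (𝓝[>] 0) (𝓝 0) := by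
  obtain ⟨hR, -, hcont, -, hu'0, -⟩ := h
  obtain ⟨y, hy0, hyR⟩ := EReal.lt_iff_exists_real_btwn.1 hR
  have hmem : domR R ∈ 𝓝[>] 0 :=
    mem_of_superset (Ioo_mem_nhdsGT (mod_cast hy0 : (0 : ℝ) < y)) (Ioo_subset_domR hyR)
  have hlim := hcont 0 ⟨le_rfl, hR⟩
  rw [ContinuousWithinAt, hu'0] at hlim
  exact hlim.mono_left (nhdsWithin_le_of_mem hmem)

namespace IsInvSol

variable {N : ℕ} {m α : ℝ} {f : ℝ → ℝ} {R : EReal} {u u' rr rr' rr'' : ℝ → ℝ} {v : ℝ}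

lemma pos (hi : IsInvSol N m α f R u rr rr' rr'') (hv : v ∈ Ioo 0 α) : 0 < rr v :=
  (hi.1 v hv).1

lemma coe_lt (hi : IsInvSol N m α f R u rr rr' rr'') (hv : v ∈ Ioo 0 α) : (rr v : EReal) < R :=
  (hi.1 v hv).2.1

lemma apply_eq (hi : IsInvSol N m α f R u rr rr' rr'') (hv : v ∈ Ioo 0 α) : u (rr v) = v :=
  (hi.1 v hv).2.2.1

lemma hasDerivAt (hi : IsInvSol N m α f R u rr rr' rr'') (hv : v ∈ Ioo 0 α) :
    HasDerivAt rr (rr' v) v :=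
  (hi.1 v hv).2.2.2.1

lemma deriv_neg (hi : IsInvSol N m α f R u rr rr' rr'') (hv : v ∈ Ioo 0 α) : rr' v < 0 :=
  (hi.1 v hv).2.2.2.2.1

lemma hasDerivAt_deriv (hi : IsInvSol N m α f R u rr rr' rr'') (hv : v ∈ Ioo 0 α) :
    HasDerivAt rr' (rr'' v) v :=
  (hi.1 v hv).2.2.2.2.2.1

lemma ode (hi : IsInvSol N m α f R u rr rr' rr'') (hv : v ∈ Ioo 0 α) :
    (m - 1) * rr'' v = ((N : ℝ) - 1) * rr' v ^ 2 / rr v + f v * |rr' v| ^ m * rr' v :=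
  (hi.1 v hv).2.2.2.2.2.2

lemma strictAntiOn (hi : IsInvSol N m α f R u rr rr' rr'') : StrictAntiOn rr (Ioo 0 α) :=
  (convex_Ioo 0 α).strictAntiOn_of_hasDerivAt_neg (fun _ hv ↦ hi.hasDerivAt hv)
    (fun _ hv ↦ hi.deriv_neg hv)

lemma exists_lt (hi : IsInvSol N m α f R u rr rr' rr'') (hR : 0 < R) {η : ℝ} (hη : 0 < η) :
    ∃ v ∈ Ioo 0 α, rr v < η := by
  obtain ⟨y, hy0, hyR⟩ := EReal.lt_iff_exists_real_btwn.1 hR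
  obtain ⟨v, hv, hrv⟩ := hi.2 (min (η / 2) y) (lt_min (half_pos hη) (mod_cast hy0))
    ((EReal.coe_le_coe_iff.2 (min_le_right _ _)).trans_lt hyR)
  exact ⟨v, hv, hrv ▸ (min_le_left _ _).trans_lt (half_lt_self hη)⟩

lemma tendsto_nhdsLT (hi : IsInvSol N m α f R u rr rr' rr'') (hR : 0 < R) (hα : 0 < α) :
    Tendsto rr (𝓝[<] α) (𝓝[>] 0) := by
  have hmem : Ioo 0 α ∈ 𝓝[<] α := Ioo_mem_nhdsLT hα
  refine tendsto_nhdsWithin_iff.2 ⟨tendsto_order.2 ⟨fun a ha ↦ ?_, fun a ha ↦ ?_⟩, ?_⟩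
  · filter_upwards [hmem] with v hv using ha.trans (hi.pos hv)
  · obtain ⟨v₀, hv₀, hrv₀⟩ := hi.exists_lt hR ha
    filter_upwards [Ioo_mem_nhdsLT hv₀.2] with v hv
    exact (hi.strictAntiOn hv₀ ⟨hv₀.1.trans hv.1, hv.2⟩ hv.1).trans hrv₀
  · filter_upwards [hmem] with v hv using hi.pos hv

lemma tendsto_limR (hi : IsInvSol N m α f R u rr rr' rr'') (hR : 0 < R) (hα : 0 < α) :
    Tendsto rr (𝓝[>] 0) (limR R) := by
  have hmem : Ioo 0 α ∈ 𝓝[>] 0 := Ioo_mem_nhdsGT hα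
  rw [limR, tendsto_comap_iff, tendsto_nhdsWithin_iff]
  refine ⟨tendsto_order.2 ⟨fun c hc ↦ ?_, fun c hc ↦ ?_⟩, ?_⟩
  · obtain ⟨x, hcx, hxR⟩ := EReal.lt_iff_exists_real_btwn.1 (max_lt hc hR)
    obtain ⟨v₀, hv₀, hrv₀⟩ := hi.2 x (mod_cast (le_max_right c 0).trans_lt hcx) hxR
    filter_upwards [Ioo_mem_nhdsGT hv₀.1] with v hv
    refine (le_max_left c 0).trans_lt (hcx.trans ?_)
    exact EReal.coe_lt_coe_iff.2 <| hrv₀ ▸ hi.strictAntiOn ⟨hv.1, hv.2.trans hv₀.2⟩ hv₀ hv.2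
  · filter_upwards [hmem] with v hv using (hi.coe_lt hv).trans hc
  · filter_upwards [hmem] with v hv using hi.coe_lt hv

lemma deriv_comp_eq (h : IsRadialSolution N m f R u u') (hi : IsInvSol N m α f R u rr rr' rr'')
    (hv : v ∈ Ioo 0 α) : u' (rr v) = (rr' v)⁻¹ := by
  have hu : HasDerivAt u (u' (rr v)) (rr v) := (h.2.1 _ ⟨(hi.pos hv).le, hi.coe_lt hv⟩).hasDerivAt
    (domR_mem_nhds (hi.pos hv) (hi.coe_lt hv))
  have hid : HasDerivAt id (u' (rr v) * rr' v) v := by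
    refine (hu.comp v (hi.hasDerivAt hv)).congr_of_eventuallyEq ?_
    filter_upwards [isOpen_Ioo.mem_nhds hv] with w hw using (hi.apply_eq hw).symm
  exact eq_inv_of_mul_eq_one_left ((hasDerivAt_id v).unique hid).symm

lemma tendsto_deriv_atBot (h : IsRadialSolution N m f R u u')
    (hi : IsInvSol N m α f R u rr rr' rr'') (hα : 0 < α) : Tendsto rr' (𝓝[<] α) atBot := by
  have hmem : Ioo 0 α ∈ 𝓝[<] α := Ioo_mem_nhdsLT hα
  have hlim : Tendsto (u' ∘ rr) (𝓝[<] α) (𝓝[<] 0) := by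
    refine tendsto_nhdsWithin_iff.2 ⟨h.tendsto_deriv_nhdsGT.comp (hi.tendsto_nhdsLT h.1 hα), ?_⟩
    filter_upwards [hmem] with w hw
    rw [Function.comp_apply, hi.deriv_comp_eq h hw]
    exact inv_lt_zero.2 (hi.deriv_neg hw)
  refine (tendsto_inv_nhdsLT_zero.comp hlim).congr' ?_
  filter_upwards [hmem] with w hw
  rw [Function.comp_apply, Function.comp_apply, hi.deriv_comp_eq h hw, inv_inv]

lemma tendsto_inv_neg_deriv_nhdsGT (h : IsRadialSolution N m f R u u')
    (hi : IsInvSol N m α f R u rr rr' rr'') (hα : 0 < α) :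
    Tendsto (fun w ↦ (-rr' w)⁻¹) (𝓝[>] 0) (𝓝 0) := by
  have hlim := (h.2.2.2.2.2.2.2.comp (hi.tendsto_limR h.1 hα)).neg
  rw [neg_zero] at hlim
  refine hlim.congr' ?_
  filter_upwards [Ioo_mem_nhdsGT hα] with w hw
  rw [Function.comp_apply, hi.deriv_comp_eq h hw, inv_neg]

/-- `rr ^ (N - 1) * (-rr')⁻¹ ^ (m - 1)` is minus the flux `r^{N-1} |u'|^{m-2} u'` read at level
`v`, so its derivative comes from the radial equation and the chain rule. -/
lemma hasDerivAt_flux (h : IsRadialSolution N m f R u u')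
    (hi : IsInvSol N m α f R u rr rr' rr'') (hv : v ∈ Ioo 0 α) :
    HasDerivAt (fun w ↦ rr w ^ (N - 1) * (-rr' w)⁻¹ ^ (m - 1))
      (rr v ^ (N - 1) * f v * rr' v) v := by
  have hflux :=
    ((h.2.2.2.2.2.1 (rr v) (hi.pos hv) (hi.coe_lt hv)).comp v (hi.hasDerivAt hv)).neg
  rw [hi.apply_eq hv] at hflux
  refine (hflux.congr_of_eventuallyEq ?_).congr_deriv (by ring)
  filter_upwards [isOpen_Ioo.mem_nhds hv] with w hw
  have hneg : u' (rr w) < 0 := hi.deriv_comp_eq h hw ▸ inv_lt_zero.2 (hi.deriv_neg hw)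
  change _ = -(rr w ^ (N - 1) * |u' (rr w)| ^ (m - 2) * u' (rr w))
  rw [mul_assoc, abs_rpow_sub_two_mul_of_neg hneg, hi.deriv_comp_eq h hw, ← inv_neg]
  ring

lemma hasDerivAt_inv_neg_deriv_rpow (hm : 1 < m) (hi : IsInvSol N m α f R u rr rr' rr'')
    (hv : v ∈ Ioo 0 α) :
    HasDerivAt (fun w ↦ (-rr' w)⁻¹ ^ m)
      (m / (m - 1) * (((N : ℝ) - 1) * (-rr' v)⁻¹ ^ (m - 1) / rr v - f v)) v := by
  have hp : 0 < -rr' v := neg_pos.2 (hi.deriv_neg hv)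
  have hinv : HasDerivAt (fun w ↦ (-rr' w)⁻¹) (rr'' v / (-rr' v) ^ 2) v :=
    ((hi.hasDerivAt_deriv hv).neg.inv hp.ne').congr_deriv (by simp only [Pi.neg_apply]; ring)
  refine (hinv.rpow_const (p := m) (Or.inl (inv_pos.2 hp).ne')).congr_deriv ?_
  have hode := hi.ode hv
  have hpm : (-rr' v) ^ m = (-rr' v) ^ (m - 1) * -rr' v := by
    rw [← Real.rpow_add_one hp.ne']; ring_nf
  rw [abs_of_neg (hi.deriv_neg hv), hpm] at hode
  rw [Real.inv_rpow hp.le]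
  have hr'' : rr'' v = (((N : ℝ) - 1) * (-rr' v) ^ 2 / rr v
      - f v * (-rr' v) ^ (m - 1) * (-rr' v) ^ 2) / (m - 1) := by
    rw [eq_div_iff (by linarith)]; linear_combination hode
  have hr' : rr' v ≠ 0 := (hi.deriv_neg hv).ne
  have hm1 : m - 1 ≠ 0 := by linarith
  rw [hr'']
  field_simp

lemma flux_le (h : IsRadialSolution N m f R u u') (hi : IsInvSol N m α f R u rr rr' rr'') {b : ℝ}
    (hb : b ∈ Ioo 0 α) (hf : ∀ z ∈ Ioc 0 b, f z ≤ 0) {z : ℝ} (hz : z ∈ Ioc 0 b) :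
    rr z ^ (N - 1) * (-rr' z)⁻¹ ^ (m - 1) ≤ rr b ^ (N - 1) * (-rr' b)⁻¹ ^ (m - 1) := by
  have hmem : ∀ z ∈ Ioc 0 b, z ∈ Ioo 0 α := fun z hz ↦ ⟨hz.1, hz.2.trans_lt hb.2⟩
  refine (convex_Ioc 0 b).monotoneOn_of_hasDerivAt_nonneg
    (fun z hz ↦ hi.hasDerivAt_flux h (hmem z hz)) (fun z hz ↦ ?_) hz ⟨hb.1, le_rfl⟩ hz.2
  exact mul_nonneg_of_nonpos_of_nonpos
    (mul_nonpos_of_nonneg_of_nonpos (pow_pos (hi.pos (hmem z hz)) _).le (hf z hz))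
    (hi.deriv_neg (hmem z hz)).le

lemma exists_gt_of_eq_top (hi : IsInvSol N m α f ⊤ u rr rr' rr'') {c : ℝ} (hc : c ∈ Ioo 0 α)
    (K : ℝ) : ∃ z ∈ Ioc 0 c, K < rr z := by
  obtain ⟨z, hz, hrz⟩ := hi.2 (max K (rr c) + 1)
    (by linarith [le_max_right K (rr c), hi.pos hc]) (EReal.coe_lt_top _)
  have hzc : z < c := by
    by_contra! hcz
    have := hi.strictAntiOn.antitoneOn hc hz hcz
    linarith [le_max_right K (rr c)]
  exact ⟨z, ⟨hz.1, hzc.le⟩, by linarith [le_max_left K (rr c)]⟩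

end IsInvSol

/-- `|u₂'|^m - |u₁'|^m` at the level `v`, as `|u_i'(r_i(v))| = (-r_i'(v))⁻¹`. -/
def gradGap (m : ℝ) (r₁' r₂' : ℝ → ℝ) (v : ℝ) : ℝ := (-r₂' v)⁻¹ ^ m - (-r₁' v)⁻¹ ^ m

lemma gradGap_pos {m : ℝ} {r₁' r₂' : ℝ → ℝ} {v : ℝ} (hm : 0 < m) (h₂ : r₂' v < 0)
    (h : r₁' v < r₂' v) : 0 < gradGap m r₁' r₂' v :=
  sub_pos.2 (Real.rpow_lt_rpow (inv_pos.2 (by linarith)).le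
    (inv_strictAnti₀ (neg_pos.2 h₂) (neg_lt_neg h)) hm)

lemma mul_sub_one_div_sub_one_nonneg {m : ℝ} {N : ℕ} (hm : 1 < m) (hN : 1 ≤ N) :
    0 ≤ m * (N - 1) / (m - 1) :=
  div_nonneg (mul_nonneg (by linarith) (sub_nonneg.2 (by exact_mod_cast hN))) (by linarith)

namespace IsInvSol

variable {N : ℕ} {m α₁ α₂ : ℝ} {f : ℝ → ℝ} {R₁ R₂ : EReal}
  {u₁ u₁' u₂ u₂' r₁ r₁' r₁'' r₂ r₂' r₂'' : ℝ → ℝ}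

lemma lt_of_forall_ne (hi₁ : IsInvSol N m α₁ f R₁ u₁ r₁ r₁' r₁'')
    (hi₂ : IsInvSol N m α₂ f R₂ u₂ r₂ r₂' r₂'') (hR₁ : 0 < R₁) (h12 : α₁ < α₂)
    (hne : ∀ v ∈ Ioo 0 α₁, r₁ v ≠ r₂ v) : ∀ v ∈ Ioo 0 α₁, r₁ v < r₂ v := by
  intro v hv
  by_contra! hge
  have hsub : Ioo 0 α₁ ⊆ Ioo 0 α₂ := Ioo_subset_Ioo_right h12.le
  have hα : α₁ ∈ Ioo 0 α₂ := ⟨hv.1.trans hv.2, h12⟩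
  obtain ⟨w, hw, hrw⟩ := hi₁.exists_lt hR₁ (hi₂.pos hα)
  have hw₂ : r₂ α₁ < r₂ w := hi₂.strictAntiOn (hsub hw) hα hw.2
  have huIcc : uIcc w v ⊆ Ioo 0 α₁ := ordConnected_Ioo.uIcc_subset hw hv
  have hcont : ContinuousOn (fun x ↦ r₁ x - r₂ x) (uIcc w v) := fun x hx ↦
    ((hi₁.hasDerivAt (huIcc hx)).sub
      (hi₂.hasDerivAt (hsub (huIcc hx)))).continuousAt.continuousWithinAt
  obtain ⟨z, hz, hz0⟩ := intermediate_value_uIcc hcont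
    (mem_uIcc.2 (Or.inl ⟨by linarith, sub_nonneg.2 hge⟩))
  exact hne z (huIcc hz) (sub_eq_zero.1 hz0)

/-- At a zero of `r₁' - r₂'` the equations give
`(m - 1) (r₁'' - r₂'') = (N - 1) r₁'² (1 / r₁ - 1 / r₂) > 0`. -/
lemma deriv_lt_of_lt (h₁ : IsRadialSolution N m f R₁ u₁ u₁')
    (hi₁ : IsInvSol N m α₁ f R₁ u₁ r₁ r₁' r₁'') (hi₂ : IsInvSol N m α₂ f R₂ u₂ r₂ r₂' r₂'')
    (hm : 1 < m) (hN : 1 < N) (h12 : α₁ < α₂) (hlt : ∀ v ∈ Ioo 0 α₁, r₁ v < r₂ v) :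
    ∀ v ∈ Ioo 0 α₁, r₁' v < r₂' v := by
  intro v hv
  have hsub : Ioo 0 α₁ ⊆ Ioo 0 α₂ := Ioo_subset_Ioo_right h12.le
  have hα : α₁ ∈ Ioo 0 α₂ := ⟨hv.1.trans hv.2, h12⟩
  have hnear : ∀ᶠ w in 𝓝[<] α₁, r₁' w < r₂' w :=
    (((hi₁.tendsto_deriv_atBot h₁ hα.1).eventually_lt_atBot (r₂' α₁ - 1)).and
      (((hi₂.hasDerivAt_deriv hα).continuousAt.eventually
        (eventually_gt_nhds (sub_one_lt _))).filter_mono nhdsWithin_le_nhds)).mono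
      fun w hw ↦ hw.1.trans hw.2
  obtain ⟨w, hw, hvw⟩ := (hnear.and (Ioo_mem_nhdsLT hv.2)).exists
  have hIcc : Icc v w ⊆ Ioo 0 α₁ := Icc_subset_Ioo hv.1 hvw.2
  refine sub_neg.1 (neg_of_deriv_pos_at_zeros (g := fun x ↦ r₁' x - r₂' x) hvw.1.le
    (fun x hx ↦ (hi₁.hasDerivAt_deriv (hIcc hx)).sub (hi₂.hasDerivAt_deriv (hsub (hIcc hx))))
    (fun x hx hx0 ↦ ?_) (sub_neg.2 hw))
  have hx := hIcc hx
  have hode₂ := hi₂.ode (hsub hx)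
  rw [← sub_eq_zero.1 hx0] at hode₂
  have hcurv : ((N : ℝ) - 1) * r₁' x ^ 2 / r₂ x < ((N : ℝ) - 1) * r₁' x ^ 2 / r₁ x :=
    div_lt_div_of_pos_left (mul_pos (sub_pos.2 (by exact_mod_cast hN))
      (sq_pos_of_neg (hi₁.deriv_neg hx))) (hi₁.pos hx) (hlt x hx)
  have : 0 < (m - 1) * (r₁'' x - r₂'' x) := by
    rw [mul_sub, hi₁.ode hx, hode₂]; linarith
  exact (mul_pos_iff_of_pos_left (by linarith)).1 this

/-- The `f`-terms of the two derivatives cancel because both are evaluated at the same level `v`. -/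
lemma exists_hasDerivAt_gradGap_le (hi₁ : IsInvSol N m α₁ f R₁ u₁ r₁ r₁' r₁'')
    (hi₂ : IsInvSol N m α₂ f R₂ u₂ r₂ r₂' r₂'') (hm : 1 < m) (hN : 1 ≤ N) {v : ℝ}
    (hv₁ : v ∈ Ioo 0 α₁) (hv₂ : v ∈ Ioo 0 α₂) (hr : r₁ v < r₂ v) (hr' : r₁' v < r₂' v) :
    ∃ D, HasDerivAt (gradGap m r₁' r₂') D v ∧
      D ≤ m * (N - 1) / (m - 1) * gradGap m r₁' r₂' v * (-r₁' v) / r₂ v := by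
  refine ⟨_, (hi₂.hasDerivAt_inv_neg_deriv_rpow hm hv₂).sub
    (hi₁.hasDerivAt_inv_neg_deriv_rpow hm hv₁), ?_⟩
  have hc := mul_sub_one_div_sub_one_nonneg hm hN
  have he : 0 < (-r₁' v)⁻¹ := inv_pos.2 (neg_pos.2 (hi₁.deriv_neg hv₁))
  have hea : (-r₁' v)⁻¹ ≤ (-r₂' v)⁻¹ :=
    (inv_strictAnti₀ (neg_pos.2 (hi₂.deriv_neg hv₂)) (neg_lt_neg hr')).le
  have hr₁ := hi₁.pos hv₁
  set a := (-r₂' v)⁻¹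
  set e := (-r₁' v)⁻¹
  have hstep : a ^ (m - 1) / r₂ v - e ^ (m - 1) / r₁ v ≤ (a ^ m - e ^ m) * e⁻¹ / r₂ v := by
    calc a ^ (m - 1) / r₂ v - e ^ (m - 1) / r₁ v ≤ (a ^ (m - 1) - e ^ (m - 1)) / r₂ v := by
          rw [sub_div]
          gcongr
      _ ≤ (a ^ m - e ^ m) * e⁻¹ / r₂ v := by
          gcongr
          · exact (hr₁.trans hr).le
          · rw [le_mul_inv_iff₀ he, mul_comm]
            exact Real.mul_rpow_sub_one_sub_le he hea m
  calc m / (m - 1) * ((N - 1) * a ^ (m - 1) / r₂ v - f v)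
        - m / (m - 1) * ((N - 1) * e ^ (m - 1) / r₁ v - f v)
      = m * (N - 1) / (m - 1) * (a ^ (m - 1) / r₂ v - e ^ (m - 1) / r₁ v) := by ring
    _ ≤ m * (N - 1) / (m - 1) * ((a ^ m - e ^ m) * e⁻¹ / r₂ v) := by gcongr
    _ = _ := by simp only [gradGap, e, inv_inv, a]; ring

lemma antitoneOn_log_gradGap_add (hi₁ : IsInvSol N m α₁ f R₁ u₁ r₁ r₁' r₁'')
    (hi₂ : IsInvSol N m α₂ f R₂ u₂ r₂ r₂' r₂'') (hm : 1 < m) (hN : 1 ≤ N) (h12 : α₁ ≤ α₂)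
    (hlt : ∀ v ∈ Ioo 0 α₁, r₁ v < r₂ v) (hlt' : ∀ v ∈ Ioo 0 α₁, r₁' v < r₂' v) {c : ℝ}
    (hc : c < α₁) {ψ ψ' : ℝ → ℝ} (hψ : ∀ z ∈ Ioc 0 c, HasDerivAt ψ (ψ' (r₁ z)) (r₁ z))
    (hψ' : ∀ z ∈ Ioc 0 c, m * (N - 1) / (m - 1) / r₂ z ≤ ψ' (r₁ z)) :
    AntitoneOn (fun v ↦ Real.log (gradGap m r₁' r₂' v) + ψ (r₁ v)) (Ioc 0 c) := by
  have hmem : ∀ z ∈ Ioc 0 c, z ∈ Ioo 0 α₁ := fun z hz ↦ ⟨hz.1, hz.2.trans_lt hc⟩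
  have hmem₂ : ∀ z ∈ Ioc 0 c, z ∈ Ioo 0 α₂ := fun z hz ↦ Ioo_subset_Ioo_right h12 (hmem z hz)
  have hG : ∀ z ∈ Ioc 0 c, 0 < gradGap m r₁' r₂' z := fun z hz ↦
    gradGap_pos (by linarith) (hi₂.deriv_neg (hmem₂ z hz)) (hlt' z (hmem z hz))
  choose! D hD hDle using fun z (hz : z ∈ Ioc 0 c) ↦ exists_hasDerivAt_gradGap_le hi₁ hi₂ hm hN
    (hmem z hz) (hmem₂ z hz) (hlt z (hmem z hz)) (hlt' z (hmem z hz))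
  refine (convex_Ioc 0 c).antitoneOn_of_hasDerivAt_nonpos (fun z hz ↦
    ((hD z hz).log (hG z hz).ne').add ((hψ z hz).comp z (hi₁.hasDerivAt (hmem z hz))))
    fun z hz ↦ ?_
  have hp : 0 < -r₁' z := neg_pos.2 (hi₁.deriv_neg (hmem z hz))
  have h1 : D z / gradGap m r₁' r₂' z ≤ m * (N - 1) / (m - 1) / r₂ z * -r₁' z := by
    rw [div_le_iff₀ (hG z hz)]
    exact (hDle z hz).trans_eq (by ring)
  have h2 := mul_le_mul_of_nonneg_right (hψ' z hz) hp.le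
  linarith

lemma tendsto_gradGap_nhdsGT (h₁ : IsRadialSolution N m f R₁ u₁ u₁')
    (h₂ : IsRadialSolution N m f R₂ u₂ u₂') (hi₁ : IsInvSol N m α₁ f R₁ u₁ r₁ r₁' r₁'')
    (hi₂ : IsInvSol N m α₂ f R₂ u₂ r₂ r₂' r₂'') (hm : 0 < m) (hα₁ : 0 < α₁) (hα₂ : 0 < α₂) :
    Tendsto (gradGap m r₁' r₂') (𝓝[>] 0) (𝓝 0) := by
  have hlim := ((hi₂.tendsto_inv_neg_deriv_nhdsGT h₂ hα₂).rpow_const (Or.inr hm.le)).sub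
    ((hi₁.tendsto_inv_neg_deriv_nhdsGT h₁ hα₁).rpow_const (Or.inr hm.le))
  rwa [Real.zero_rpow hm.ne', sub_zero] at hlim

lemma false_of_ne_top (h₁ : IsRadialSolution N m f R₁ u₁ u₁')
    (h₂ : IsRadialSolution N m f R₂ u₂ u₂') (hi₁ : IsInvSol N m α₁ f R₁ u₁ r₁ r₁' r₁'')
    (hi₂ : IsInvSol N m α₂ f R₂ u₂ r₂ r₂' r₂'') (hm : 1 < m) (hN : 1 ≤ N) (h12 : α₁ ≤ α₂)
    (hlt : ∀ v ∈ Ioo 0 α₁, r₁ v < r₂ v) (hlt' : ∀ v ∈ Ioo 0 α₁, r₁' v < r₂' v)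
    (hR₁ : R₁ ≠ ⊤) {c : ℝ} (hc : c ∈ Ioo 0 α₁) : False := by
  obtain ⟨R, rfl⟩ : ∃ R : ℝ, R₁ = R :=
    ⟨R₁.toReal, (EReal.coe_toReal hR₁ (h₁.1.trans' EReal.bot_lt_zero).ne').symm⟩
  have hsub : Ioo 0 α₁ ⊆ Ioo 0 α₂ := Ioo_subset_Ioo_right h12
  have hκ := mul_sub_one_div_sub_one_nonneg hm hN
  set C := m * (N - 1) / (m - 1) / r₂ c
  have hC : 0 ≤ C := div_nonneg hκ (hi₂.pos (hsub hc)).le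
  have hanti := antitoneOn_log_gradGap_add hi₁ hi₂ hm hN h12 hlt hlt' hc.2
    (ψ := fun x ↦ x * C) (ψ' := fun _ ↦ C) (fun z _ ↦ hasDerivAt_mul_const C) fun z hz ↦
      div_le_div_of_nonneg_left hκ (hi₂.pos (hsub hc))
        (hi₂.strictAntiOn.antitoneOn (hsub ⟨hz.1, hz.2.trans_lt hc.2⟩) (hsub hc) hz.2)
  set δ := Real.exp (Real.log (gradGap m r₁' r₂' c) + (r₁ c - R) * C)
  have hlow : ∀ z ∈ Ioc 0 c, δ ≤ gradGap m r₁' r₂' z := fun z hz ↦ by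
    have hz₁ : z ∈ Ioo 0 α₁ := ⟨hz.1, hz.2.trans_lt hc.2⟩
    have hrR : r₁ z < R := mod_cast hi₁.coe_lt hz₁
    rw [← Real.le_log_iff_exp_le (gradGap_pos (by linarith) (hi₂.deriv_neg (hsub hz₁))
      (hlt' z hz₁))]
    have := hanti hz ⟨hc.1, le_rfl⟩ hz.2
    dsimp only at this
    nlinarith
  obtain ⟨z, hGz, hz⟩ := (((tendsto_gradGap_nhdsGT h₁ h₂ hi₁ hi₂ (by linarith)
    (hc.1.trans hc.2) (hc.1.trans_le (hc.2.le.trans h12))).eventually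
    (eventually_lt_nhds (Real.exp_pos _))).and (Ioc_mem_nhdsGT hc.1)).exists
  exact (hlow z hz).not_gt hGz

lemma gradGap_mul_rpow_le (hi₁ : IsInvSol N m α₁ f R₁ u₁ r₁ r₁' r₁'')
    (hi₂ : IsInvSol N m α₂ f R₂ u₂ r₂ r₂' r₂'') (hm : 1 < m) (hN : 1 ≤ N) (h12 : α₁ ≤ α₂)
    (hlt : ∀ v ∈ Ioo 0 α₁, r₁ v < r₂ v) (hlt' : ∀ v ∈ Ioo 0 α₁, r₁' v < r₂' v) {c : ℝ}
    (hc : c ∈ Ioo 0 α₁) {z : ℝ} (hz : z ∈ Ioc 0 c) :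
    gradGap m r₁' r₂' c * r₁ c ^ (m * (N - 1) / (m - 1))
      ≤ gradGap m r₁' r₂' z * r₁ z ^ (m * (N - 1) / (m - 1)) := by
  set κ := m * (N - 1) / (m - 1)
  have hκ : 0 ≤ κ := mul_sub_one_div_sub_one_nonneg hm hN
  have hmem : ∀ z ∈ Ioc 0 c, z ∈ Ioo 0 α₁ := fun z hz ↦ ⟨hz.1, hz.2.trans_lt hc.2⟩
  have hpos : ∀ z ∈ Ioc 0 c, 0 < gradGap m r₁' r₂' z ∧ 0 < r₁ z := fun z hz ↦
    ⟨gradGap_pos (by linarith) (hi₂.deriv_neg (Ioo_subset_Ioo_right h12 (hmem z hz)))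
      (hlt' z (hmem z hz)), hi₁.pos (hmem z hz)⟩
  have hanti := antitoneOn_log_gradGap_add hi₁ hi₂ hm hN h12 hlt hlt' hc.2
    (ψ := fun x ↦ κ * Real.log x) (ψ' := fun x ↦ κ * x⁻¹)
    (fun z hz ↦ (Real.hasDerivAt_log (hpos z hz).2.ne').const_mul κ)
    fun z hz ↦ by
      rw [← div_eq_mul_inv]
      exact div_le_div_of_nonneg_left hκ (hpos z hz).2 (hlt z (hmem z hz)).le
  have hc' : c ∈ Ioc 0 c := ⟨hc.1, le_rfl⟩
  rw [← Real.log_le_log_iff (mul_pos (hpos c hc').1 (Real.rpow_pos_of_pos (hpos c hc').2 _))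
    (mul_pos (hpos z hz).1 (Real.rpow_pos_of_pos (hpos z hz).2 _)),
    Real.log_mul (hpos c hc').1.ne' (Real.rpow_pos_of_pos (hpos c hc').2 _).ne',
    Real.log_mul (hpos z hz).1.ne' (Real.rpow_pos_of_pos (hpos z hz).2 _).ne',
    Real.log_rpow (hpos c hc').2, Real.log_rpow (hpos z hz).2]
  exact hanti hz hc' hz.2

lemma inv_neg_deriv_rpow_mul_rpow_le (h₂ : IsRadialSolution N m f R₂ u₂ u₂')
    (hi₁ : IsInvSol N m α₁ f R₁ u₁ r₁ r₁' r₁'') (hi₂ : IsInvSol N m α₂ f R₂ u₂ r₂ r₂' r₂'')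
    (hm : 1 < m) (hN : 1 ≤ N) (h12 : α₁ ≤ α₂) (hlt : ∀ v ∈ Ioo 0 α₁, r₁ v < r₂ v) {b : ℝ}
    (hb : b ∈ Ioo 0 α₁) (hf : ∀ z ∈ Ioc 0 b, f z ≤ 0) {z : ℝ} (hz : z ∈ Ioc 0 b) :
    (-r₂' z)⁻¹ ^ m * r₁ z ^ (m * (N - 1) / (m - 1))
      ≤ (r₂ b ^ (N - 1) * (-r₂' b)⁻¹ ^ (m - 1)) ^ (m / (m - 1)) := by
  have hsub : Ioo 0 α₁ ⊆ Ioo 0 α₂ := Ioo_subset_Ioo_right h12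
  have hz₁ : z ∈ Ioo 0 α₁ := ⟨hz.1, hz.2.trans_lt hb.2⟩
  have hV : 0 < (-r₂' z)⁻¹ := inv_pos.2 (neg_pos.2 (hi₂.deriv_neg (hsub hz₁)))
  have hr₁ := hi₁.pos hz₁
  have hsplit : (-r₂' z)⁻¹ ^ m * r₁ z ^ (m * (N - 1) / (m - 1))
      = ((-r₂' z)⁻¹ ^ (m - 1) * r₁ z ^ (N - 1)) ^ (m / (m - 1)) := by
    have hm1 : m - 1 ≠ 0 := by linarith
    rw [Real.mul_rpow (Real.rpow_nonneg hV.le _) (pow_nonneg hr₁.le _), ← Real.rpow_mul hV.le,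
      ← Real.rpow_natCast, ← Real.rpow_mul hr₁.le, Nat.cast_pred (by omega)]
    congr 2 <;> field_simp
  rw [hsplit]
  refine Real.rpow_le_rpow (by positivity) ?_ (div_nonneg (by linarith) (by linarith))
  calc (-r₂' z)⁻¹ ^ (m - 1) * r₁ z ^ (N - 1) ≤ (-r₂' z)⁻¹ ^ (m - 1) * r₂ z ^ (N - 1) := by
        gcongr
        exact (hlt z hz₁).le
    _ = r₂ z ^ (N - 1) * (-r₂' z)⁻¹ ^ (m - 1) := mul_comm _ _
    _ ≤ _ := hi₂.flux_le h₂ (hsub hb) hf hz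

lemma exists_lt_one_neg_deriv_le (h₂ : IsRadialSolution N m f R₂ u₂ u₂')
    (hi₁ : IsInvSol N m α₁ f R₁ u₁ r₁ r₁' r₁'') (hi₂ : IsInvSol N m α₂ f R₂ u₂ r₂ r₂' r₂'')
    (hm : 1 < m) (hN : 1 ≤ N) (h12 : α₁ ≤ α₂) (hlt : ∀ v ∈ Ioo 0 α₁, r₁ v < r₂ v)
    (hlt' : ∀ v ∈ Ioo 0 α₁, r₁' v < r₂' v) {b : ℝ} (hb : b ∈ Ioo 0 α₁)
    (hf : ∀ z ∈ Ioc 0 b, f z ≤ 0) : ∃ ρ < 1, ∀ z ∈ Ioc 0 b, -r₂' z ≤ ρ * -r₁' z := by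
  have hsub : Ioo 0 α₁ ⊆ Ioo 0 α₂ := Ioo_subset_Ioo_right h12
  have hmem : ∀ z ∈ Ioc 0 b, z ∈ Ioo 0 α₁ := fun z hz ↦ ⟨hz.1, hz.2.trans_lt hb.2⟩
  have hp₁ : ∀ z ∈ Ioc 0 b, 0 < -r₁' z := fun z hz ↦ neg_pos.2 (hi₁.deriv_neg (hmem z hz))
  have hp₂ : ∀ z ∈ Ioc 0 b, 0 < -r₂' z := fun z hz ↦ neg_pos.2 (hi₂.deriv_neg (hsub (hmem z hz)))
  have hb' : b ∈ Ioc 0 b := ⟨hb.1, le_rfl⟩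
  set κ := m * (N - 1) / (m - 1)
  set M := (r₂ b ^ (N - 1) * (-r₂' b)⁻¹ ^ (m - 1)) ^ (m / (m - 1))
  have hM : 0 < M := Real.rpow_pos_of_pos (mul_pos (pow_pos (hi₂.pos (hsub hb)) _)
    (Real.rpow_pos_of_pos (inv_pos.2 (hp₂ b hb')) _)) _
  set ε := gradGap m r₁' r₂' b * r₁ b ^ κ / M
  have hε : 0 < ε := div_pos (mul_pos (gradGap_pos (by linarith) (neg_pos.1 (hp₂ b hb'))
    (hlt' b hb)) (Real.rpow_pos_of_pos (hi₁.pos hb) _)) hM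
  have hV : ∀ z ∈ Ioc 0 b, (-r₁' z)⁻¹ ^ m ≤ (1 - ε) * (-r₂' z)⁻¹ ^ m := fun z hz ↦ by
    have hr := Real.rpow_pos_of_pos (hi₁.pos (hmem z hz)) κ
    have hεG : ε * (-r₂' z)⁻¹ ^ m * r₁ z ^ κ ≤ gradGap m r₁' r₂' z * r₁ z ^ κ :=
      calc ε * (-r₂' z)⁻¹ ^ m * r₁ z ^ κ = ε * ((-r₂' z)⁻¹ ^ m * r₁ z ^ κ) := mul_assoc _ _ _
        _ ≤ ε * M := mul_le_mul_of_nonneg_left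
            (inv_neg_deriv_rpow_mul_rpow_le h₂ hi₁ hi₂ hm hN h12 hlt hb hf hz) hε.le
        _ = gradGap m r₁' r₂' b * r₁ b ^ κ := div_mul_cancel₀ _ hM.ne'
        _ ≤ _ := gradGap_mul_rpow_le hi₁ hi₂ hm hN h12 hlt hlt' hb hz
    have := le_of_mul_le_mul_right hεG hr
    rw [gradGap] at this
    linarith
  have hk : 0 ≤ 1 - ε := nonneg_of_mul_nonneg_left
    ((Real.rpow_pos_of_pos (inv_pos.2 (hp₁ b hb')) m).le.trans (hV b hb'))
    (Real.rpow_pos_of_pos (inv_pos.2 (hp₂ b hb')) m)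
  refine ⟨(1 - ε) ^ m⁻¹, Real.rpow_lt_one hk (by linarith) (inv_pos.2 (by linarith)),
    fun z hz ↦ ?_⟩
  have hle := Real.le_rpow_inv_mul_of_rpow_le (inv_pos.2 (hp₁ z hz)).le
    (inv_pos.2 (hp₂ z hz)).le hk (by linarith) (hV z hz)
  rwa [← div_eq_mul_inv, le_div_iff₀ (hp₂ z hz), inv_mul_le_iff₀ (hp₁ z hz), mul_comm] at hle

lemma false_of_eq_top (h₂ : IsRadialSolution N m f R₂ u₂ u₂')
    (hi₁ : IsInvSol N m α₁ f ⊤ u₁ r₁ r₁' r₁'') (hi₂ : IsInvSol N m α₂ f R₂ u₂ r₂ r₂' r₂'')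
    (hm : 1 < m) (hN : 1 ≤ N) (h12 : α₁ ≤ α₂) (hlt : ∀ v ∈ Ioo 0 α₁, r₁ v < r₂ v)
    (hlt' : ∀ v ∈ Ioo 0 α₁, r₁' v < r₂' v) {b : ℝ} (hb : b ∈ Ioo 0 α₁)
    (hf : ∀ z ∈ Ioc 0 b, f z ≤ 0) : False := by
  have hmem : ∀ z ∈ Ioc 0 b, z ∈ Ioo 0 α₁ := fun z hz ↦ ⟨hz.1, hz.2.trans_lt hb.2⟩
  obtain ⟨ρ, hρ, hle⟩ := exists_lt_one_neg_deriv_le h₂ hi₁ hi₂ hm hN h12 hlt hlt' hb hf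
  have hanti : AntitoneOn (fun z ↦ ρ * r₁ z - r₂ z) (Ioc 0 b) :=
    (convex_Ioc 0 b).antitoneOn_of_hasDerivAt_nonpos
      (fun z hz ↦ ((hi₁.hasDerivAt (hmem z hz)).const_mul ρ).sub
        (hi₂.hasDerivAt (Ioo_subset_Ioo_right h12 (hmem z hz))))
      fun z hz ↦ by linarith [hle z hz]
  obtain ⟨z, hz, hrz⟩ := hi₁.exists_gt_of_eq_top hb ((r₂ b - ρ * r₁ b) / (1 - ρ))
  rw [div_lt_iff₀ (sub_pos.2 hρ)] at hrz
  have := hanti hz ⟨hb.1, le_rfl⟩ hz.2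
  have := hlt z (hmem z hz)
  dsimp only at *
  nlinarith

end IsInvSol

theorem stmt17_general (N : ℕ) (m b : ℝ) (f : ℝ → ℝ) (hm : 1 < m)
    (hN2 : 2 ≤ N) (hf : H1cond b f)
    (R₁ R₂ : EReal) (u₁ u₁' u₂ u₂' r₁ r₁' r₁'' r₂ r₂' r₂'' : ℝ → ℝ)
    (h₁ : IsRadialSolution N m f R₁ u₁ u₁')
    (h₂ : IsRadialSolution N m f R₂ u₂ u₂')
    (hb : b < u₁ 0) (h12 : u₁ 0 < u₂ 0)
    (hi₁ : IsInvSol N m (u₁ 0) f R₁ u₁ r₁ r₁' r₁'')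
    (hi₂ : IsInvSol N m (u₂ 0) f R₂ u₂ r₂ r₂' r₂'') :
    ∃ v : ℝ, 0 < v ∧ v < u₁ 0 ∧ r₁ v = r₂ v := by
  obtain ⟨hb0, -, hfb, -⟩ := hf
  by_contra! hne
  have hb₁ : b ∈ Ioo 0 (u₁ 0) := ⟨hb0, hb⟩
  have hlt := hi₁.lt_of_forall_ne hi₂ h₁.1 h12 fun v hv ↦ hne v hv.1 hv.2
  have hlt' := hi₁.deriv_lt_of_lt h₁ hi₂ hm (by omega) h12 hlt
  rcases eq_or_ne R₁ ⊤ with rfl | hR₁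
  · exact hi₁.false_of_eq_top h₂ hi₂ hm (by omega) h12.le hlt hlt' hb₁ fun z hz ↦ hfb z hz.1 hz.2
  · exact hi₁.false_of_ne_top h₁ h₂ hi₂ hm (by omega) h12.le hlt hlt' hR₁ hb₁

/-- with `f` locally Lipschitz on `(b,∞)` and two distinct radial solutions
with `b < α₁ < α₂`, the function `t = r₁ - r₂` has at least one zero in `(0, α₁)`. -/
theorem stmt17 (N : ℕ) (m b : ℝ) (f : ℝ → ℝ) (hm : 1 < m)
    (hN2 : 2 ≤ N) (hNm : (N : ℝ) ≤ m) (hf : H1cond b f)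
    (hLip : ∀ x : ℝ, b < x → ∃ K : NNReal, ∃ ε : ℝ, 0 < ε ∧
      LipschitzOnWith K f (Set.Ioi b ∩ Metric.ball x ε))
    (R₁ R₂ : EReal) (u₁ u₁' u₂ u₂' r₁ r₁' r₁'' r₂ r₂' r₂'' : ℝ → ℝ)
    (h₁ : IsRadialSolution N m f R₁ u₁ u₁')
    (h₂ : IsRadialSolution N m f R₂ u₂ u₂')
    (hne : ¬ (R₁ = R₂ ∧ ∀ r ∈ domR R₁, u₁ r = u₂ r))
    (hb : b < u₁ 0) (h12 : u₁ 0 < u₂ 0)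
    (hi₁ : IsInvSol N m (u₁ 0) f R₁ u₁ r₁ r₁' r₁'')
    (hi₂ : IsInvSol N m (u₂ 0) f R₂ u₂ r₂ r₂' r₂'') :
    ∃ v : ℝ, 0 < v ∧ v < u₁ 0 ∧ r₁ v = r₂ v :=
  stmt17_general N m b f hm hN2 hf R₁ R₂ u₁ u₁' u₂ u₂' r₁ r₁' r₁'' r₂ r₂' r₂'' h₁ h₂ hb h12 hi₁ hi₂

end
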